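/- Let k ≥ 2 and p ≥ 1. For any finite alphabet D and any function g : D^{k−1} → {0,…,p−1}, the number of strings x ∈ Dᵏ with g(x₁,…,x_{k−1}) > g(x₂,…,x_k) is at most (1 − ⌊(k−1)/p⌋/(k−1))·(1 − 1/k)·|D|ᵏ. -/
import Mathlib


open Finset


lemma cyclic_descents_le {k p : ℕ} [NeZero k] (hp : 1 ≤ p) (a : ZMod k → Fin p) :
    (univ.filter (fun j : ZMod k => a (j+1) < a j)).card ≤ k - 1 - (k-1)/p := by
  classical
  set Dsc := univ.filter (fun j : ZMod k => a (j+1) < a j) with hDdef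
  set Asc := univ.filter (fun j : ZMod k => ¬ a (j+1) < a j) with hAdef
  have hcard : Dsc.card + Asc.card = k := by
    rw [hDdef, hAdef, Finset.card_filter_add_card_filter_not, Finset.card_univ,
      ZMod.card]
  have htel : ∑ j : ZMod k, (((a (j+1) : ℕ) : ℤ) - ((a j : ℕ) : ℤ)) = 0 := by
    have h1 : ∑ j : ZMod k, ((a (j+1) : ℕ) : ℤ) = ∑ j : ZMod k, ((a j : ℕ) : ℤ) :=
      Fintype.sum_equiv (Equiv.addRight (1 : ZMod k)) _ _ (fun j => rfl)
    rw [Finset.sum_sub_distrib, h1, sub_self]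
  have hsplit : ∑ j ∈ Dsc, (((a (j+1) : ℕ) : ℤ) - ((a j : ℕ) : ℤ))
      + ∑ j ∈ Asc, (((a (j+1) : ℕ) : ℤ) - ((a j : ℕ) : ℤ)) = 0 := by
    rw [hDdef, hAdef, Finset.sum_filter_add_sum_filter_not]; exact htel
  have hD : (Dsc.card : ℤ) ≤ ∑ j ∈ Dsc, (((a j : ℕ) : ℤ) - ((a (j+1) : ℕ) : ℤ)) := by
    rw [Finset.card_eq_sum_ones, Nat.cast_sum]
    refine Finset.sum_le_sum (fun j hj => ?_)
    have := (Finset.mem_filter.mp hj).2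
    omega
  have hA : ∑ j ∈ Asc, (((a (j+1) : ℕ) : ℤ) - ((a j : ℕ) : ℤ)) ≤ (Asc.card : ℤ) * (p - 1) := by
    rw [Finset.card_eq_sum_ones, Nat.cast_sum, Finset.sum_mul]
    refine Finset.sum_le_sum (fun j hj => ?_)
    have h1 := (a (j+1)).isLt
    have h2 := (a j).isLt
    push_cast
    omega
  have hkey : (k : ℤ) ≤ (Asc.card : ℤ) * p := by
    have : (Dsc.card : ℤ) ≤ (Asc.card : ℤ) * (p - 1) := by
      calc (Dsc.card : ℤ) ≤ _ := hD
        _ = ∑ j ∈ Asc, (((a (j+1) : ℕ) : ℤ) - ((a j : ℕ) : ℤ)) := by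
            have hneg : ∑ j ∈ Dsc, (((a j : ℕ) : ℤ) - ((a (j+1) : ℕ) : ℤ))
                = - ∑ j ∈ Dsc, (((a (j+1) : ℕ) : ℤ) - ((a j : ℕ) : ℤ)) := by
              rw [← Finset.sum_neg_distrib]; simp [neg_sub]
            linarith [hsplit, hneg]
        _ ≤ _ := hA
    have hc : (Dsc.card : ℤ) + (Asc.card : ℤ) = k := by exact_mod_cast hcard
    nlinarith
  have hkn : k ≤ Asc.card * p := by exact_mod_cast hkey
  have hq : (k-1)/p < Asc.card := by
    rw [Nat.div_lt_iff_lt_mul (by omega)]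
    have : 1 ≤ k := (NeZero.one_le)
    omega
  omega



/-- discrete upper bound. For any finite alphabet `D` and any
`g : D^{k-1} → {0,…,p-1}`, the number of strings `x ∈ D^k` with
`g(x₁,…,x_{k−1}) > g(x₂,…,x_k)` is at most
`(1 − ⌊(k−1)/p⌋/(k−1))·(1 − 1/k)·|D|^k`. -/
theorem stmt_12 (k p : ℕ) (hk : 2 ≤ k) (hp : 1 ≤ p)
    (D : Type*) [Fintype D] [DecidableEq D]
    (g : (Fin (k - 1) → D) → Fin p) :
    ((Finset.univ.filter (fun x : Fin k → D =>
        g (fun i => x (Fin.castLE (by omega) i)) >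
        g (fun i => x ⟨i.1 + 1, by omega⟩))).card : ℝ) ≤
      (1 - (((k - 1) / p : ℕ) : ℝ) / ((k : ℝ) - 1)) * (1 - 1 / (k : ℝ)) *
        (Fintype.card D : ℝ) ^ k := by
  classical
  have : NeZero k := ⟨by omega⟩
  set m := (k - 1) / p with hm
  -- cyclic windows
  set a : (ZMod k → D) → ZMod k → Fin p :=
    fun y j => g (fun i => y (j + (i.1 : ZMod k))) with ha
  have hshift : ∀ (y : ZMod k → D) (j t : ZMod k),
      a (fun s => y (s + j)) t = a y (t + j) := by
    intro y j t
    simp only [ha]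
    congr 1
    funext i
    congr 1
    ring
  set S : Finset (ZMod k → D) := univ.filter (fun y => a y 1 < a y 0) with hS
  -- step A: the theorem's set has the same card as S
  have hTS : (Finset.univ.filter (fun x : Fin k → D =>
        g (fun i => x (Fin.castLE (by omega) i)) >
        g (fun i => x ⟨i.1 + 1, by omega⟩))).card = S.card := by
    have key0 : ∀ x : Fin k → D,
        a (fun j : ZMod k => x ⟨j.val, ZMod.val_lt j⟩) 0
          = g (fun i => x (Fin.castLE (by omega) i)) := by
      intro x
      simp only [ha]
      congr 1
      funext i
      congr 1
      rw [zero_add]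
      apply Fin.ext
      simp [ZMod.val_natCast, Nat.mod_eq_of_lt (show i.1 < k by omega)]
    have key1 : ∀ x : Fin k → D,
        a (fun j : ZMod k => x ⟨j.val, ZMod.val_lt j⟩) 1
          = g (fun i => x ⟨i.1 + 1, by omega⟩) := by
      intro x
      simp only [ha]
      congr 1
      funext i
      congr 1
      apply Fin.ext
      show ((1 : ZMod k) + (i.1 : ZMod k)).val = i.1 + 1
      rw [show (1 : ZMod k) + (i.1 : ZMod k) = ((i.1 + 1 : ℕ) : ZMod k) by push_cast; ring,
        ZMod.val_natCast, Nat.mod_eq_of_lt (show i.1 + 1 < k by omega)]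
    have e0 : ∀ y : ZMod k → D,
        a y 0 = g (fun i => y ((((Fin.castLE (by omega : k - 1 ≤ k) i) : Fin k).1 : ZMod k))) := by
      intro y
      simp only [ha]
      congr 1
      funext i
      rw [zero_add, Fin.coe_castLE]
    have e1 : ∀ y : ZMod k → D,
        a y 1 = g (fun i : Fin (k-1) => y ((i.1 + 1 : ℕ) : ZMod k)) := by
      intro y
      simp only [ha]
      congr 1
      funext i
      congr 1
      push_cast
      ring
    refine Finset.card_bij' (fun x _ => fun j : ZMod k => x ⟨j.val, ZMod.val_lt j⟩)
      (fun y _ => fun t : Fin k => y ((t.1 : ℕ) : ZMod k)) ?_ ?_ ?_ ?_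
    · intro x hx
      simp only [Finset.mem_filter, Finset.mem_univ, true_and, hS] at hx ⊢
      rw [key0, key1]
      exact hx
    · intro y hy
      simp only [Finset.mem_filter, Finset.mem_univ, true_and, hS] at hy ⊢
      rw [e0 y, e1 y] at hy
      exact hy
    · intro x hx
      funext t
      have h2 : (((t.1 : ℕ) : ZMod k)).val = t.1 := by
        simp [ZMod.val_natCast, Nat.mod_eq_of_lt t.2]
      exact congrArg x (Fin.ext h2)
    · intro y hy
      funext j
      exact congrArg y (ZMod.natCast_rightInverse j)
  -- step B: k * S.card ≤ |D|^k * (k - 1 - m)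
  have hB : k * S.card ≤ (Fintype.card D)^k * (k - 1 - m) := by
    have hrot : ∀ j : ZMod k,
        (univ.filter (fun y : ZMod k → D => a y (j+1) < a y j)).card = S.card := by
      intro j
      refine Finset.card_bij' (fun y _ => fun t => y (t + j)) (fun z _ => fun t => z (t - j))
        ?_ ?_ ?_ ?_
      · intro y hy
        simp only [hS, Finset.mem_filter, Finset.mem_univ, true_and] at hy ⊢
        rw [hshift, hshift, zero_add, add_comm 1 j]
        exact hy
      · intro z hz
        simp only [hS, Finset.mem_filter, Finset.mem_univ, true_and] at hz ⊢
        have h0 : ∀ t, a (fun s => z (s - j)) t = a z (t - j) := by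
          intro t
          have := hshift z (-j) t
          simpa [sub_eq_add_neg] using this
        rw [h0, h0]
        simpa using hz
      · intro y hy; funext t; simp
      · intro z hz; funext t; simp
    calc k * S.card = ∑ _j : ZMod k, S.card := by
          rw [Finset.sum_const, Finset.card_univ, ZMod.card, smul_eq_mul]
      _ = ∑ j : ZMod k, (univ.filter (fun y : ZMod k → D => a y (j+1) < a y j)).card := by
          exact Finset.sum_congr rfl (fun j _ => (hrot j).symm)
      _ = ∑ y : ZMod k → D, (univ.filter (fun j : ZMod k => a y (j+1) < a y j)).card := by
          simp only [Finset.card_filter]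
          rw [Finset.sum_comm]
      _ ≤ ∑ _y : ZMod k → D, (k - 1 - m) :=
          Finset.sum_le_sum (fun y _ => cyclic_descents_le hp (a y))
      _ = (Fintype.card D)^k * (k - 1 - m) := by
          rw [Finset.sum_const, Finset.card_univ, smul_eq_mul, Fintype.card_fun, ZMod.card]
  -- final arithmetic
  have hmle : m ≤ k - 1 := Nat.div_le_self _ _
  clear_value m
  rw [hTS]
  have hkR : (0:ℝ) < k := by positivity
  have hk1 : (k:ℝ) - 1 ≠ 0 := by
    have : (2:ℝ) ≤ k := by exact_mod_cast hk
    linarith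
  have hrhs : (1 - (m : ℝ) / ((k : ℝ) - 1)) * (1 - 1 / (k : ℝ)) *
        (Fintype.card D : ℝ) ^ k = ((k - 1 - m : ℕ) : ℝ) / k * (Fintype.card D : ℝ) ^ k := by
    have h1 : ((k - 1 - m : ℕ) : ℝ) = (k : ℝ) - 1 - m := by
      have h2 : k - 1 - m + m + 1 = k := by
        rw [Nat.sub_add_cancel hmle, Nat.sub_add_cancel (le_trans one_le_two hk)]
      have h3 := congrArg (Nat.cast : ℕ → ℝ) h2
      push_cast at h3
      linarith
    rw [h1]
    field_simp
  rw [hrhs]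
  rw [div_mul_eq_mul_div, le_div_iff₀ hkR]
  have : ((k * S.card : ℕ) : ℝ) ≤ (((Fintype.card D)^k * (k - 1 - m) : ℕ) : ℝ) := by
    exact_mod_cast hB
  push_cast at this
  linarith
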